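/- arXiv:1711.00439 — 2 statements merged into one kernel-verified Lean document; each statement's English description precedes it below -/
import Mathlib

section
/- Let A ∈ ℝ^{m×n} and C ∈ ℝ^{m×c} satisfy |xᵀAAᵀx − xᵀCCᵀx| ≤ 3ε‖A‖_F² for all unit vectors x ∈ ℝ^m, with 0 < ε < 1. Let H_k ∈ ℝ^{m×k} consist of the top k left singular vectors of C as orthonormal columns, k ≤ c. Then ‖A − H_kH_kᵀA‖_F² ≤ ‖A − A_k‖_F² + 6kε‖A‖_F², where A_k is the best rank-k approximation of A in Frobenius norm. -/
open Matrix

noncomputable def frobSq {m n : ℕ} (A : Matrix (Fin m) (Fin n) ℝ) : ℝ :=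
  ∑ i, ∑ j, (A i j)^2

noncomputable def eunorm {m : ℕ} (v : Fin m → ℝ) : ℝ := Real.sqrt (v ⬝ᵥ v)

lemma hermAAT {m n : ℕ} (A : Matrix (Fin m) (Fin n) ℝ) : (A * Aᵀ).IsHermitian := by
  have h : Aᵀ = Aᴴ := by
    ext i j
    simp [Matrix.conjTranspose_apply]
  rw [h]
  exact Matrix.isHermitian_mul_conjTranspose_self A

/-- `svalSq A k` : square of the `(k+1)`-st largest singular value of `A`
(eigenvalues of `A * Aᵀ` sorted in decreasing order), `0` beyond index `m`. -/
noncomputable def svalSq {m n : ℕ} (A : Matrix (Fin m) (Fin n) ℝ) (k : ℕ) : ℝ :=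
  if k < m then
    (Multiset.sort (Finset.univ.val.map (hermAAT A).eigenvalues) (· ≤ ·)).getD (m - 1 - k) 0
  else 0

/-- Spectral (operator) norm of a square real matrix. -/
noncomputable def specNorm {m : ℕ} (M : Matrix (Fin m) (Fin m) ℝ) : ℝ :=
  ‖Matrix.toEuclideanCLM (𝕜 := ℝ) M‖

/-!
The columns `h i` of `H` are unit eigenvectors of `C Cᵀ`, so
`‖A - H Hᵀ A‖² = ‖A‖² - ∑ hᵢᵀ A Aᵀ hᵢ`, and the hypothesis on Rayleigh quotients gives
`∑ hᵢᵀ A Aᵀ hᵢ ≥ ∑ σᵢ(C)² - 3kε‖A‖²`. Testing the same hypothesis on the top `k` eigenvectors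
of `A Aᵀ` and applying Ky Fan's maximum principle to `C Cᵀ` gives
`∑ σᵢ(A)² ≤ ∑ σᵢ(C)² + 3kε‖A‖²`.

Ky Fan's principle: for an orthonormal `k`-frame `qᵢ`, `∑ qᵢᵀ M qᵢ = ∑ⱼ λⱼ wⱼ` with weights
`wⱼ = ∑ᵢ ⟪bⱼ, qᵢ⟫² ∈ [0, 1]` (Bessel) summing to `k` (Parseval), and such a weighted sum is
largest when the weight sits on the `k` largest eigenvalues.
-/

open scoped RealInnerProductSpace

theorem Multiset.sort_map_univ_eq_ofFn {α : Type*} [LinearOrder α] {m : ℕ} (f : Fin m → α)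
    {σ : Equiv.Perm (Fin m)} (hσ : Monotone (f ∘ σ)) :
    (Finset.univ.val.map f).sort (· ≤ ·) = List.ofFn (f ∘ σ) := by
  rw [← Multiset.map_univ_val_equiv σ, Multiset.map_map, Fin.univ_val_map, Multiset.coe_sort]
  exact List.mergeSort_eq_self _ hσ.sortedLE_ofFn.pairwise

theorem Finset.sum_mul_le_sum_of_threshold {ι : Type*} [Fintype ι]
    (s : Finset ι) {d w : ι → ℝ} {t : ℝ}
    (hs : ∀ j ∈ s, t ≤ d j) (hsc : ∀ j ∉ s, d j ≤ t) (hw0 : ∀ j, 0 ≤ w j) (hw1 : ∀ j, w j ≤ 1)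
    (hw : ∑ j, w j = s.card) :
    ∑ j, d j * w j ≤ ∑ j ∈ s, d j := by
  classical
  have hw' : ∑ j ∈ s, (w j - 1) + ∑ j ∈ sᶜ, w j = 0 := by
    rw [Finset.sum_sub_distrib, Finset.sum_const, nsmul_one]
    linarith [Finset.sum_add_sum_compl s w]
  calc ∑ j, d j * w j = ∑ j ∈ s, d j * w j + ∑ j ∈ sᶜ, d j * w j :=
        (Finset.sum_add_sum_compl s _).symm
    _ ≤ ∑ j ∈ s, (d j + t * (w j - 1)) + ∑ j ∈ sᶜ, t * w j := by
        gcongr with j hj j hj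
        · nlinarith [mul_nonneg (sub_nonneg.2 (hs j hj)) (sub_nonneg.2 (hw1 j))]
        · exact hw0 j
        · exact hsc j (Finset.mem_compl.1 hj)
    _ = ∑ j ∈ s, d j + t * (∑ j ∈ s, (w j - 1) + ∑ j ∈ sᶜ, w j) := by
        rw [Finset.sum_add_distrib, ← Finset.mul_sum, ← Finset.mul_sum]
        ring
    _ = ∑ j ∈ s, d j := by rw [hw', mul_zero, add_zero]

section InnerProductSpace

variable {E : Type*} [NormedAddCommGroup E] [InnerProductSpace ℝ E]

theorem OrthonormalBasis.inner_map_self_eq_sum {ι : Type*} [Fintype ι]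
    (b : OrthonormalBasis ι ℝ E) {T : E →ₗ[ℝ] E} {d : ι → ℝ} (hT : ∀ j, T (b j) = d j • b j)
    (x : E) : ⟪x, T x⟫ = ∑ j, d j * ⟪b j, x⟫ ^ 2 := by
  have hTx : T x = ∑ j, (⟪b j, x⟫ * d j) • b j := by
    conv_lhs => rw [← b.sum_repr' x]
    simp only [map_sum, map_smul, hT, smul_smul]
  rw [hTx, inner_sum]
  refine Finset.sum_congr rfl fun j _ => ?_
  rw [real_inner_smul_right, real_inner_comm]
  ring

-- Ky Fan's maximum principle.
theorem OrthonormalBasis.sum_inner_map_self_le {m k : ℕ} (b : OrthonormalBasis (Fin m) ℝ E)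
    {T : E →ₗ[ℝ] E} {d : ℕ → ℝ} (hd : Antitone d) (hT : ∀ j : Fin m, T (b j) = d j • b j)
    {q : Fin k → E} (hq : Orthonormal ℝ q) :
    ∑ i, ⟪q i, T (q i)⟫ ≤ ∑ i : Fin k, d i := by
  have : FiniteDimensional ℝ E := .of_basis b.toBasis
  have hkm : k ≤ m := by
    simpa [Module.finrank_eq_card_basis b.toBasis] using
      hq.linearIndependent.fintype_card_le_finrank
  set w : Fin m → ℝ := fun j => ∑ i, ⟪b j, q i⟫ ^ 2
  have hw1 : ∀ j, w j ≤ 1 := fun j => by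
    simpa [w, real_inner_comm, b.orthonormal.1 j] using
      hq.sum_inner_products_le (b j) (s := Finset.univ)
  have hw : ∑ j, w j = k := by
    rw [Finset.sum_comm]
    simp [b.sum_sq_inner_right, hq.1]
  set s := Finset.univ.map (Fin.castLEEmb hkm)
  have hmem : ∀ j : Fin m, j ∈ s ↔ (j : ℕ) < k := fun j =>
    ⟨fun h => by obtain ⟨i, -, rfl⟩ := Finset.mem_map.1 h; simp,
     fun h => Finset.mem_map.2 ⟨⟨j, h⟩, Finset.mem_univ _, rfl⟩⟩
  calc ∑ i, ⟪q i, T (q i)⟫ = ∑ j : Fin m, d j * w j := by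
        simp_rw [b.inner_map_self_eq_sum hT, w, Finset.mul_sum]
        exact Finset.sum_comm
    _ ≤ ∑ j ∈ s, d j :=
        Finset.sum_mul_le_sum_of_threshold s (t := d k)
          (fun j hj => hd ((hmem j).1 hj).le) (fun j hj => hd (not_lt.1 ((hmem j).not.1 hj)))
          (fun j => by positivity) hw1 (by simpa [s] using hw)
    _ = ∑ i : Fin k, d i := by simp [s]

end InnerProductSpace

theorem EuclideanSpace.real_inner_eq_dotProduct {ι : Type*} [Fintype ι]
    (x y : EuclideanSpace ℝ ι) : ⟪x, y⟫ = x.ofLp ⬝ᵥ y.ofLp := by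
  rw [EuclideanSpace.inner_eq_star_dotProduct, star_trivial, dotProduct_comm]

section svalSq

variable {m p : ℕ} (B : Matrix (Fin m) (Fin p) ℝ)

theorem svalSq_eq_comp_sort (i : Fin m) :
    svalSq B i = ((hermAAT B).eigenvalues ∘ Tuple.sort (hermAAT B).eigenvalues) i.rev := by
  rw [svalSq, if_pos i.isLt,
    Multiset.sort_map_univ_eq_ofFn _ (Tuple.monotone_sort _),
    List.getD_eq_getElem _ _ (by simp only [List.length_ofFn]; omega), List.getElem_ofFn]
  congr 1
  ext
  simp only [Fin.val_rev]
  omega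

theorem svalSq_nonneg (i : ℕ) : 0 ≤ svalSq B i := by
  by_cases hi : i < m
  · have hpsd := posSemidef_self_mul_conjTranspose B
    rw [conjTranspose_eq_transpose_of_trivial] at hpsd
    rw [← Fin.val_mk hi, svalSq_eq_comp_sort]
    exact hpsd.eigenvalues_nonneg _
  · rw [svalSq, if_neg hi]

theorem svalSq_antitone : Antitone (svalSq B) := by
  intro i j hij
  by_cases hj : j < m
  · rw [← Fin.val_mk hj, ← Fin.val_mk (hij.trans_lt hj), svalSq_eq_comp_sort, svalSq_eq_comp_sort]
    exact Tuple.monotone_sort _ (Fin.rev_le_rev.2 hij)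
  · rw [svalSq, if_neg hj]
    exact svalSq_nonneg B i

theorem exists_orthonormalBasis_toLpLin_eq_svalSq_smul :
    ∃ b : OrthonormalBasis (Fin m) ℝ (EuclideanSpace ℝ (Fin m)),
      ∀ j : Fin m, toLpLin 2 2 (B * Bᵀ) (b j) = svalSq B j • b j := by
  let σ := Fin.revPerm.trans (Tuple.sort (hermAAT B).eigenvalues)
  refine ⟨(hermAAT B).eigenvectorBasis.reindex σ.symm, fun j => ?_⟩
  ext1
  simp [σ, ofLp_toLpLin, (hermAAT B).mulVec_eigenvectorBasis, svalSq_eq_comp_sort]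

end svalSq

section frobSq

variable {m n k : ℕ} (A : Matrix (Fin m) (Fin n) ℝ)

theorem frobSq_eq_trace : frobSq A = (Aᵀ * A).trace := by
  simp only [frobSq, trace, diag, mul_apply, transpose_apply, sq]
  exact Finset.sum_comm

theorem frobSq_sub_mul_transpose_mul {H : Matrix (Fin m) (Fin k) ℝ} (hH : Hᵀ * H = 1) :
    frobSq (A - H * Hᵀ * A) = frobSq A - frobSq (Hᵀ * A) := by
  have hHH : Hᵀ * (H * (Hᵀ * A)) = Hᵀ * A := by rw [← Matrix.mul_assoc, hH, Matrix.one_mul]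
  simp only [frobSq_eq_trace, transpose_sub, transpose_mul, transpose_transpose, Matrix.sub_mul,
    Matrix.mul_sub, Matrix.mul_assoc, hHH, trace_sub]
  ring

theorem frobSq_transpose_mul_eq_sum (H : Matrix (Fin m) (Fin k) ℝ) :
    frobSq (Hᵀ * A) = ∑ i, (fun x => H x i) ⬝ᵥ ((A * Aᵀ) *ᵥ fun x => H x i) := by
  have hrow : ∀ i, (Hᵀ * A) i = Aᵀ *ᵥ fun x => H x i := fun i => by
    ext j
    simp only [mul_apply, mulVec, dotProduct, transpose_apply, mul_comm]
  calc frobSq (Hᵀ * A) = ∑ i, (Hᵀ * A) i ⬝ᵥ (Hᵀ * A) i := by simp only [frobSq, dotProduct, sq]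
    _ = _ := by simp only [hrow, ← mulVec_mulVec, dotProduct_mulVec, mulVec_transpose]

end frobSq

theorem sum_le_frobSq_transpose_mul_add {m n k : ℕ} {A : Matrix (Fin m) (Fin n) ℝ}
    {M : Matrix (Fin m) (Fin m) ℝ} {H : Matrix (Fin m) (Fin k) ℝ} {d : Fin k → ℝ} {δ : ℝ}
    (hH : Hᵀ * H = 1) (hMH : ∀ i, M *ᵥ (fun x => H x i) = d i • fun x => H x i)
    (hMA : ∀ x : Fin m → ℝ, x ⬝ᵥ x = 1 → x ⬝ᵥ (M *ᵥ x) ≤ x ⬝ᵥ ((A * Aᵀ) *ᵥ x) + δ) :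
    ∑ i, d i ≤ frobSq (Hᵀ * A) + k * δ := by
  have hunit : ∀ i, (fun x => H x i) ⬝ᵥ (fun x => H x i) = 1 := fun i => by
    simpa [mul_apply, dotProduct] using congrFun (congrFun hH i) i
  have hd : ∀ i, d i = (fun x => H x i) ⬝ᵥ (M *ᵥ fun x => H x i) := fun i => by
    rw [hMH, dotProduct_smul, hunit, smul_eq_mul, mul_one]
  rw [frobSq_transpose_mul_eq_sum]
  simp only [hd]
  exact (Finset.sum_le_sum fun i _ => hMA _ (hunit i)).trans_eq (by simp [Finset.sum_add_distrib])

theorem sum_svalSq_le_sum_svalSq_add {m p p' k : ℕ} {B : Matrix (Fin m) (Fin p) ℝ}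
    {B' : Matrix (Fin m) (Fin p') ℝ} {δ : ℝ} (hkm : k ≤ m)
    (h : ∀ x : Fin m → ℝ, x ⬝ᵥ x = 1 → x ⬝ᵥ ((B * Bᵀ) *ᵥ x) ≤ x ⬝ᵥ ((B' * B'ᵀ) *ᵥ x) + δ) :
    ∑ i : Fin k, svalSq B i ≤ ∑ i : Fin k, svalSq B' i + k * δ := by
  obtain ⟨b, hb⟩ := exists_orthonormalBasis_toLpLin_eq_svalSq_smul B
  obtain ⟨b', hb'⟩ := exists_orthonormalBasis_toLpLin_eq_svalSq_smul B'
  set q : Fin k → EuclideanSpace ℝ (Fin m) := fun i => b (Fin.castLE hkm i)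
  have hq : Orthonormal ℝ q := b.orthonormal.comp _ (Fin.castLE_injective hkm)
  have hunit : ∀ i, (q i).ofLp ⬝ᵥ (q i).ofLp = 1 := fun i => by
    rw [← EuclideanSpace.real_inner_eq_dotProduct, real_inner_self_eq_norm_sq, hq.1, one_pow]
  have hqB : ∀ i, toLpLin 2 2 (B * Bᵀ) (q i) = svalSq B i • q i := fun i => hb _
  calc ∑ i : Fin k, svalSq B i = ∑ i, ⟪q i, toLpLin 2 2 (B * Bᵀ) (q i)⟫ :=
        Finset.sum_congr rfl fun i _ => by
          rw [hqB, real_inner_smul_right, real_inner_self_eq_norm_sq, hq.1, one_pow, mul_one]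
    _ ≤ ∑ i, ⟪q i, toLpLin 2 2 (B' * B'ᵀ) (q i)⟫ + k * δ := by
        simp only [EuclideanSpace.real_inner_eq_dotProduct, ofLp_toLpLin, toLin'_apply]
        exact (Finset.sum_le_sum fun i _ => h _ (hunit i)).trans_eq
          (by simp [Finset.sum_add_distrib])
    _ ≤ ∑ i : Fin k, svalSq B' i + k * δ :=
        add_le_add_left (b'.sum_inner_map_self_le (svalSq_antitone B') hb' hq) _

theorem stmt7_general {m n c k : ℕ} (A : Matrix (Fin m) (Fin n) ℝ) (C : Matrix (Fin m) (Fin c) ℝ)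
    (ε : ℝ)
    (hRQ : ∀ x : Fin m → ℝ, x ⬝ᵥ x = 1 →
      |x ⬝ᵥ ((A * Aᵀ) *ᵥ x) - x ⬝ᵥ ((C * Cᵀ) *ᵥ x)| ≤ 3 * ε * frobSq A)
    (H : Matrix (Fin m) (Fin k) ℝ) (hH : Hᵀ * H = 1)
    (hsing : ∀ i : Fin k,
      (C * Cᵀ) *ᵥ (fun x => H x i) = svalSq C (i : ℕ) • (fun x => H x i)) :
    frobSq (A - H * Hᵀ * A) ≤
      (frobSq A - ∑ i : Fin k, svalSq A (i : ℕ)) + 6 * k * ε * frobSq A := by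
  have hkm : k ≤ m := by
    simpa [hH] using (rank_mul_le_right Hᵀ H).trans (rank_le_height H)
  have hC_le : ∑ i : Fin k, svalSq C i ≤ frobSq (Hᵀ * A) + k * (3 * ε * frobSq A) :=
    sum_le_frobSq_transpose_mul_add hH hsing fun x hx => by
      linarith [(abs_le.1 (hRQ x hx)).1]
  have hA_le : ∑ i : Fin k, svalSq A i ≤ ∑ i : Fin k, svalSq C i + k * (3 * ε * frobSq A) :=
    sum_svalSq_le_sum_svalSq_add hkm fun x hx => by
      linarith [(abs_le.1 (hRQ x hx)).2]
  rw [frobSq_sub_mul_transpose_mul A hH]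
  linarith

theorem stmt7 {m n c k : ℕ} (A : Matrix (Fin m) (Fin n) ℝ) (C : Matrix (Fin m) (Fin c) ℝ)
    (ε : ℝ) (hε0 : 0 < ε) (hε1 : ε < 1)
    (hRQ : ∀ x : Fin m → ℝ, x ⬝ᵥ x = 1 →
      |x ⬝ᵥ ((A * Aᵀ) *ᵥ x) - x ⬝ᵥ ((C * Cᵀ) *ᵥ x)| ≤ 3 * ε * frobSq A)
    (hk : k ≤ c)
    (H : Matrix (Fin m) (Fin k) ℝ) (hH : Hᵀ * H = 1)
    (hsing : ∀ i : Fin k,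
      (C * Cᵀ) *ᵥ (fun x => H x i) = svalSq C (i : ℕ) • (fun x => H x i)) :
    frobSq (A - H * Hᵀ * A) ≤
      (frobSq A - ∑ i : Fin k, svalSq A (i : ℕ)) + 6 * k * ε * frobSq A :=
  stmt7_general A C ε hRQ H hH hsing
end

section
/- Let A ∈ ℝ^{m×n} and C ∈ ℝ^{m×c} satisfy |xᵀAAᵀx − xᵀCCᵀx| ≤ 3ε‖A‖_F² for all unit vectors x ∈ ℝ^m, with 0 < ε < 1. Let H_k consist of the top k left singular vectors of C (k ≤ c). Then ‖A − H_kH_kᵀA‖₂² ≤ ‖A − A_k‖₂² + 6ε‖A‖_F², where ‖·‖₂ is the spectral norm and A_k is the best rank-k approximation of A. -/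
/-!
Write `B = A - H Hᵀ A`. For every `x`, `xᵀ B Bᵀ x = zᵀ A Aᵀ z` with `z = x - H Hᵀ x`, which is
orthogonal to the columns of `H` and no longer than `x`. The hypothesis bounds `zᵀ A Aᵀ z` by
`zᵀ C Cᵀ z + 3ε‖A‖_F² ‖z‖²`; as the columns of `H` are top eigenvectors of `C Cᵀ`, the first term is
at most `σ_{k+1}(C)² ‖z‖²`; and Weyl's inequality, applied to the same hypothesis, gives
`σ_{k+1}(C)² ≤ σ_{k+1}(A)² + 3ε‖A‖_F²`. Both eigenvalue comparisons come from one counting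
principle: if `xᵀ M x > c ‖x‖²` on a `d`-dimensional subspace, then `M` has at least `d`
eigenvalues above `c`.
-/

open Matrix

lemma Antitone.card_fin_lt_apply_le {α : Type*} [LinearOrder α] {f : ℕ → α} (hf : Antitone f)
    (m k : ℕ) :
    Fintype.card {j : Fin m // f k < f j} ≤ Fintype.card {j : Fin k // f k < f j} := by
  refine Fintype.card_le_of_injective
    (fun j => ⟨⟨j.1, lt_of_not_ge fun hkj => (hf hkj).not_gt j.2⟩, j.2⟩) fun i j hij => ?_
  simpa [Fin.ext_iff, Subtype.ext_iff] using hij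

lemma Antitone.lt_card_fin_lt_apply {α : Type*} [LinearOrder α] {f : ℕ → α} (hf : Antitone f)
    {m k : ℕ} {t : α} (hk : k < m) (ht : t < f k) :
    k < Fintype.card {j : Fin m // t < f j} := by
  have := Fintype.card_le_of_injective
    (fun i : Fin (k + 1) => (⟨⟨i, by omega⟩, ht.trans_le (hf (Nat.lt_succ_iff.mp i.2))⟩ :
      {j : Fin m // t < f j})) fun i j hij => by simpa [Fin.ext_iff] using hij
  simpa using this

namespace Matrix

section QuadraticForm

variable {n ι : Type*} [Fintype n] [Fintype ι]

lemma dotProduct_mul_transpose_mulVec (N : Matrix n ι ℝ) (x y : n → ℝ) :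
    x ⬝ᵥ ((N * Nᵀ) *ᵥ y) = Nᵀ *ᵥ x ⬝ᵥ Nᵀ *ᵥ y := by
  rw [← mulVec_mulVec, dotProduct_mulVec, mulVec_transpose N x]

lemma mulVec_dotProduct_mulVec_mulVec (V : Matrix n ι ℝ) (N : Matrix n n ℝ) (a : ι → ℝ) :
    V *ᵥ a ⬝ᵥ (N *ᵥ (V *ᵥ a)) = a ⬝ᵥ ((Vᵀ * N * V) *ᵥ a) := by
  rw [← mulVec_mulVec, ← mulVec_mulVec, dotProduct_mulVec a, vecMul_transpose]

lemma dotProduct_diagonal_mulVec [DecidableEq ι] (e a : ι → ℝ) :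
    a ⬝ᵥ (diagonal e *ᵥ a) = ∑ i, e i * a i ^ 2 := by
  simp only [dotProduct, mulVec_diagonal]
  exact Finset.sum_congr rfl fun i _ => by ring

lemma abs_dotProduct_mulVec_le_mul_dotProduct_self {N : Matrix n n ℝ} {c : ℝ}
    (h : ∀ y, y ⬝ᵥ y = 1 → |y ⬝ᵥ (N *ᵥ y)| ≤ c) (x : n → ℝ) :
    |x ⬝ᵥ (N *ᵥ x)| ≤ c * (x ⬝ᵥ x) := by
  rcases eq_or_ne x 0 with rfl | hx
  · simp
  have hpos : 0 < x ⬝ᵥ x := by simpa using dotProduct_star_self_pos_iff.mpr hx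
  have hs : √(x ⬝ᵥ x) ^ 2 = x ⬝ᵥ x := Real.sq_sqrt hpos.le
  have := h ((√(x ⬝ᵥ x))⁻¹ • x) (by
    rw [smul_dotProduct, dotProduct_smul, smul_eq_mul, smul_eq_mul, ← mul_assoc, ← sq, inv_pow,
      hs, inv_mul_cancel₀ hpos.ne'])
  rw [mulVec_smul, smul_dotProduct, dotProduct_smul, smul_eq_mul, smul_eq_mul, ← mul_assoc,
    ← sq, inv_pow, hs, abs_mul, abs_of_pos (inv_pos.mpr hpos), inv_mul_le_iff₀ hpos] at this
  linarith

theorem mul_dotProduct_lt_of_transpose_mul_eq_diagonal [DecidableEq ι] {M : Matrix n n ℝ}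
    {V : Matrix n ι ℝ} {c : ℝ} {d e : ι → ℝ}
    (hV : Vᵀ * V = diagonal d) (hMV : Vᵀ * M * V = diagonal e) (hde : ∀ i, c * d i < e i)
    {a : ι → ℝ} (ha : a ≠ 0) :
    c * (V *ᵥ a ⬝ᵥ V *ᵥ a) < V *ᵥ a ⬝ᵥ (M *ᵥ (V *ᵥ a)) := by
  have hself : V *ᵥ a ⬝ᵥ V *ᵥ a = a ⬝ᵥ ((Vᵀ * V) *ᵥ a) := by
    rw [← mulVec_mulVec, dotProduct_mulVec a, vecMul_transpose]
  rw [hself, hV, mulVec_dotProduct_mulVec_mulVec, hMV, dotProduct_diagonal_mulVec,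
    dotProduct_diagonal_mulVec, Finset.mul_sum]
  obtain ⟨i, hi⟩ := Function.ne_iff.mp ha
  refine Finset.sum_lt_sum (fun j _ => ?_) ⟨i, Finset.mem_univ _, ?_⟩
  · rw [← mul_assoc]; exact mul_le_mul_of_nonneg_right (hde j).le (sq_nonneg _)
  · rw [← mul_assoc]; exact mul_lt_mul_of_pos_right (hde i) (pow_two_pos_of_ne_zero hi)

theorem transpose_mul_mul_fromCols_replicateCol_eq_diagonal [DecidableEq ι] {M : Matrix n n ℝ}
    (hM : Mᵀ = M) {G : Matrix n ι ℝ} (hG : Gᵀ * G = 1) {d : ι → ℝ}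
    (hMG : M * G = G * diagonal d) {z : n → ℝ} (hz : Gᵀ *ᵥ z = 0) :
    (G.fromCols (replicateCol Unit z))ᵀ * M * G.fromCols (replicateCol Unit z) =
      diagonal (Sum.elim d fun _ => z ⬝ᵥ (M *ᵥ z)) := by
  have hGM : Gᵀ * M = diagonal d * Gᵀ := by
    rw [← hM, ← transpose_mul, hMG, transpose_mul, diagonal_transpose]
  have hZG : replicateRow Unit z * G = 0 := by
    rw [← replicateRow_vecMul, ← mulVec_transpose, hz, replicateRow_zero]
  have hGZ : Gᵀ * replicateCol Unit z = 0 := by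
    rw [← replicateCol_mulVec, hz, replicateCol_zero]
  rw [transpose_fromCols, fromRows_mul, fromRows_mul_fromCols, transpose_replicateCol, hGM,
    Matrix.mul_assoc, Matrix.mul_assoc, hG, hGZ, Matrix.mul_one, Matrix.mul_zero, Matrix.mul_assoc,
    hMG, ← Matrix.mul_assoc, hZG, Matrix.zero_mul, Matrix.mul_assoc, ← replicateCol_mulVec M,
    replicateRow_mul_replicateCol, ← fromBlocks_diagonal]
  congr 1

end QuadraticForm

namespace IsHermitian

variable {n : Type*} [Fintype n] [DecidableEq n] {M : Matrix n n ℝ} (hM : M.IsHermitian)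

lemma transpose_eigenvectorUnitary_mul_self :
    (hM.eigenvectorUnitary : Matrix n n ℝ)ᵀ * hM.eigenvectorUnitary = 1 := by
  simpa [star_eq_conjTranspose] using Unitary.coe_star_mul_self hM.eigenvectorUnitary

lemma eigenvectorUnitary_mul_transpose_self :
    (hM.eigenvectorUnitary : Matrix n n ℝ) * (hM.eigenvectorUnitary : Matrix n n ℝ)ᵀ = 1 := by
  simpa [star_eq_conjTranspose] using Unitary.coe_mul_star_self hM.eigenvectorUnitary

lemma transpose_eigenvectorUnitary_mul_mul :
    (hM.eigenvectorUnitary : Matrix n n ℝ)ᵀ * M * hM.eigenvectorUnitary =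
      diagonal hM.eigenvalues := by
  simpa [star_eq_conjTranspose] using hM.conjStarAlgAut_star_eigenvectorUnitary

lemma transpose_eigenvectorUnitary_mulVec (x : n → ℝ) :
    (hM.eigenvectorUnitary : Matrix n n ℝ)ᵀ *ᵥ x = fun i => ⇑(hM.eigenvectorBasis i) ⬝ᵥ x :=
  rfl

lemma eigenvalues₀_eq_eigenvalues (j : Fin (Fintype.card n)) :
    hM.eigenvalues₀ j = hM.eigenvalues (Fintype.equivOfCardEq (Fintype.card_fin _) j) := by
  simp [IsHermitian.eigenvalues]

lemma sort_eigenvalues_eq_ofFn :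
    Multiset.sort (Finset.univ.val.map hM.eigenvalues) (· ≤ ·) =
      List.ofFn (hM.eigenvalues₀ ∘ Fin.rev) := by
  refine List.Perm.eq_of_pairwise' (Multiset.pairwise_sort ..)
    (hM.eigenvalues₀_antitone.comp Fin.rev_anti).sortedLE_ofFn.pairwise ?_
  rw [← Multiset.coe_eq_coe, Multiset.sort_eq, ← Fin.univ_val_map, ← Multiset.map_map,
    show (Fin.rev : Fin (Fintype.card n) → _) = Fin.revPerm from rfl,
    Multiset.map_univ_val_equiv, show hM.eigenvalues = hM.eigenvalues₀ ∘ _ from rfl,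
    ← Multiset.map_map, Multiset.map_univ_val_equiv]

lemma dotProduct_mulVec_eq_sum (x : n → ℝ) :
    x ⬝ᵥ (M *ᵥ x) = ∑ i, hM.eigenvalues i * (⇑(hM.eigenvectorBasis i) ⬝ᵥ x) ^ 2 := by
  have hM' : M = hM.eigenvectorUnitary * diagonal hM.eigenvalues *
      (hM.eigenvectorUnitary : Matrix n n ℝ)ᵀ := by
    rw [← hM.transpose_eigenvectorUnitary_mul_mul, Matrix.mul_assoc, Matrix.mul_assoc,
      hM.eigenvectorUnitary_mul_transpose_self, Matrix.mul_one, ← Matrix.mul_assoc,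
      hM.eigenvectorUnitary_mul_transpose_self, Matrix.one_mul]
  conv_lhs => rw [hM', ← mulVec_mulVec, ← mulVec_mulVec, dotProduct_mulVec, ← mulVec_transpose,
    transpose_eigenvectorUnitary_mulVec]
  simp [dotProduct, mulVec_diagonal, sq, mul_left_comm]

lemma dotProduct_self_eq_sum (x : n → ℝ) :
    x ⬝ᵥ x = ∑ i, (⇑(hM.eigenvectorBasis i) ⬝ᵥ x) ^ 2 := by
  have h : ((hM.eigenvectorUnitary : Matrix n n ℝ)ᵀ *ᵥ x) ⬝ᵥ
      ((hM.eigenvectorUnitary : Matrix n n ℝ)ᵀ *ᵥ x) = x ⬝ᵥ x := by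
    rw [dotProduct_mulVec, vecMul_transpose, mulVec_mulVec,
      hM.eigenvectorUnitary_mul_transpose_self, one_mulVec]
  rw [← h, transpose_eigenvectorUnitary_mulVec]
  simp [dotProduct, sq]

lemma eigenvectorBasis_dotProduct_self (i : n) :
    ⇑(hM.eigenvectorBasis i) ⬝ᵥ ⇑(hM.eigenvectorBasis i) = 1 := by
  simpa [Matrix.mul_apply, dotProduct] using
    congrFun (congrFun hM.transpose_eigenvectorUnitary_mul_self i) i

lemma eigenvalues_le_of_forall_dotProduct_mulVec_le {T : ℝ}
    (h : ∀ x, x ⬝ᵥ (M *ᵥ x) ≤ T * (x ⬝ᵥ x)) (i : n) : hM.eigenvalues i ≤ T := by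
  simpa [hM.mulVec_eigenvectorBasis, hM.eigenvectorBasis_dotProduct_self] using
    h (hM.eigenvectorBasis i)

/-- A subspace (the range of `V`) on which `x ↦ xᵀ M x - c ‖x‖²` is positive definite has
dimension at most the number of eigenvalues of `M` above `c`. -/
theorem card_le_card_eigenvalues_gt {ι : Type*} [Fintype ι] (V : Matrix n ι ℝ) {c : ℝ}
    (hV : ∀ a ≠ 0, c * (V *ᵥ a ⬝ᵥ V *ᵥ a) < V *ᵥ a ⬝ᵥ (M *ᵥ (V *ᵥ a))) :
    Fintype.card ι ≤ Fintype.card {i // c < hM.eigenvalues i} := by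
  by_contra! hcard
  let R : Matrix {i // c < hM.eigenvalues i} n ℝ := of fun s => ⇑(hM.eigenvectorBasis s.1)
  have hker : LinearMap.ker (R * V).mulVecLin ≠ ⊥ := LinearMap.ker_ne_bot_of_finrank_lt <| by
    simpa only [Module.finrank_fintype_fun_eq_card] using hcard
  obtain ⟨a, ha, ha0⟩ := Submodule.exists_mem_ne_zero_of_ne_bot hker
  have hperp : ∀ i, c < hM.eigenvalues i → ⇑(hM.eigenvectorBasis i) ⬝ᵥ V *ᵥ a = 0 :=
    fun i hi => congrFun (show R *ᵥ (V *ᵥ a) = 0 by rwa [mulVec_mulVec]) ⟨i, hi⟩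
  have hle : V *ᵥ a ⬝ᵥ (M *ᵥ (V *ᵥ a)) ≤ c * (V *ᵥ a ⬝ᵥ V *ᵥ a) := by
    rw [hM.dotProduct_mulVec_eq_sum, hM.dotProduct_self_eq_sum, Finset.mul_sum]
    refine Finset.sum_le_sum fun i _ => ?_
    rcases lt_or_ge c (hM.eigenvalues i) with hi | hi
    · simp [hperp i hi]
    · exact mul_le_mul_of_nonneg_right hi (sq_nonneg _)
  exact (hV a ha0).not_ge hle

theorem exists_mul_dotProduct_lt_of_eigenvalues_gt (c : ℝ) :
    ∃ V : Matrix n {i // c < hM.eigenvalues i} ℝ,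
      ∀ a ≠ 0, c * (V *ᵥ a ⬝ᵥ V *ᵥ a) < V *ᵥ a ⬝ᵥ (M *ᵥ (V *ᵥ a)) := by
  refine ⟨(hM.eigenvectorUnitary : Matrix n n ℝ).submatrix id Subtype.val, fun a ha =>
    mul_dotProduct_lt_of_transpose_mul_eq_diagonal (d := 1) (e := hM.eigenvalues ∘ Subtype.val)
      ?_ ?_ (fun i => by simpa using i.2) ha⟩
  · rw [transpose_submatrix, ← submatrix_mul _ _ _ _ _ Function.bijective_id,
      hM.transpose_eigenvectorUnitary_mul_self, submatrix_one _ Subtype.val_injective]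
    exact diagonal_one.symm
  · rw [← submatrix_diagonal _ _ Subtype.val_injective, ← hM.transpose_eigenvectorUnitary_mul_mul,
      submatrix_mul _ _ _ id _ Function.bijective_id,
      submatrix_mul _ _ _ id _ Function.bijective_id, transpose_submatrix, submatrix_id_id]

end IsHermitian

section Projection

variable {ι κ ν : Type*} [Fintype ι] [Fintype κ] [Fintype ν] (H : Matrix ι κ ℝ) (x : ι → ℝ)

lemma transpose_mulVec_sub_mul_transpose_mulVec [DecidableEq κ] (hH : Hᵀ * H = 1) :
    Hᵀ *ᵥ (x - (H * Hᵀ) *ᵥ x) = 0 := by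
  rw [mulVec_sub, mulVec_mulVec, ← Matrix.mul_assoc, hH, Matrix.one_mul, sub_self]

lemma dotProduct_self_sub_mul_transpose_mulVec_le [DecidableEq κ] (hH : Hᵀ * H = 1) :
    (x - (H * Hᵀ) *ᵥ x) ⬝ᵥ (x - (H * Hᵀ) *ᵥ x) ≤ x ⬝ᵥ x := by
  have horth : (x - (H * Hᵀ) *ᵥ x) ⬝ᵥ ((H * Hᵀ) *ᵥ x) = 0 := by
    rw [dotProduct_mul_transpose_mulVec, transpose_mulVec_sub_mul_transpose_mulVec H x hH,
      zero_dotProduct]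
  calc (x - (H * Hᵀ) *ᵥ x) ⬝ᵥ (x - (H * Hᵀ) *ᵥ x)
      = x ⬝ᵥ x - Hᵀ *ᵥ x ⬝ᵥ Hᵀ *ᵥ x := by
        rw [dotProduct_sub (x - _), horth, sub_zero, sub_dotProduct,
          dotProduct_comm ((H * Hᵀ) *ᵥ x), dotProduct_mul_transpose_mulVec]
    _ ≤ x ⬝ᵥ x := sub_le_self _ (by simpa using dotProduct_star_self_nonneg (Hᵀ *ᵥ x))

lemma dotProduct_sub_mul_transpose_mul_mulVec (A : Matrix ι ν ℝ) :
    x ⬝ᵥ (((A - H * Hᵀ * A) * (A - H * Hᵀ * A)ᵀ) *ᵥ x) =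
      (x - (H * Hᵀ) *ᵥ x) ⬝ᵥ ((A * Aᵀ) *ᵥ (x - (H * Hᵀ) *ᵥ x)) := by
  have h : (A - H * Hᵀ * A)ᵀ *ᵥ x = Aᵀ *ᵥ (x - (H * Hᵀ) *ᵥ x) := by
    rw [transpose_sub, transpose_mul, transpose_mul, transpose_transpose, sub_mulVec, mulVec_sub,
      mulVec_mulVec]
  rw [dotProduct_mul_transpose_mulVec, h, dotProduct_mul_transpose_mulVec]

end Projection

end Matrix

section SingularValues

variable {m n c : ℕ}

lemma svalSq_eq_eigenvalues₀ (A : Matrix (Fin m) (Fin n) ℝ) {k : ℕ} (hk : k < m) :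
    svalSq A k = (hermAAT A).eigenvalues₀ ⟨k, by simpa using hk⟩ := by
  rw [svalSq, if_pos hk, (hermAAT A).sort_eigenvalues_eq_ofFn,
    List.getD_eq_getElem _ _ (by simp; omega), List.getElem_ofFn, Function.comp_apply]
  congr 1
  ext
  simp only [Fin.val_rev, Fintype.card_fin]
  omega

lemma svalSq_of_le (A : Matrix (Fin m) (Fin n) ℝ) {k : ℕ} (hk : m ≤ k) : svalSq A k = 0 :=
  if_neg hk.not_gt

lemma svalSq_nonneg_s8 (A : Matrix (Fin m) (Fin n) ℝ) (k : ℕ) : 0 ≤ svalSq A k := by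
  rcases lt_or_ge k m with hk | hk
  · have hpsd : (A * Aᵀ).PosSemidef := by
      simpa only [conjTranspose_eq_transpose_of_trivial] using posSemidef_self_mul_conjTranspose A
    rw [svalSq_eq_eigenvalues₀ A hk, IsHermitian.eigenvalues₀_eq_eigenvalues]
    exact hpsd.eigenvalues_nonneg _
  · rw [svalSq_of_le A hk]

lemma svalSq_antitone_s8 (A : Matrix (Fin m) (Fin n) ℝ) : Antitone (svalSq A) := by
  intro j k hjk
  rcases lt_or_ge k m with hk | hk
  · rw [svalSq_eq_eigenvalues₀ A hk, svalSq_eq_eigenvalues₀ A (hjk.trans_lt hk)]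
    exact (hermAAT A).eigenvalues₀_antitone hjk
  · rw [svalSq_of_le A hk]
    exact svalSq_nonneg_s8 A j

lemma card_eigenvalues_gt_eq_card_svalSq_gt (A : Matrix (Fin m) (Fin n) ℝ) (t : ℝ) :
    Fintype.card {i // t < (hermAAT A).eigenvalues i} =
      Fintype.card {j : Fin m // t < svalSq A j} :=
  calc Fintype.card {i // t < (hermAAT A).eigenvalues i}
      = Fintype.card {j // t < (hermAAT A).eigenvalues₀ j} :=
        Fintype.card_congr (Equiv.subtypeEquiv (Fintype.equivOfCardEq (Fintype.card_fin _))
          fun j => by rw [IsHermitian.eigenvalues₀_eq_eigenvalues]).symm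
    _ = Fintype.card {j : Fin m // t < svalSq A j} :=
        Fintype.card_congr (Equiv.subtypeEquiv (finCongr (Fintype.card_fin m))
          fun j => by rw [svalSq_eq_eigenvalues₀ A (by simpa using j.2)]; rfl)

theorem svalSq_le_of_forall_dotProduct_mulVec_le (A : Matrix (Fin m) (Fin n) ℝ) {T : ℝ}
    (hT : 0 ≤ T) (h : ∀ x, x ⬝ᵥ ((A * Aᵀ) *ᵥ x) ≤ T * (x ⬝ᵥ x)) (k : ℕ) : svalSq A k ≤ T := by
  by_contra! hlt
  have hk : k < m := lt_of_not_ge fun hk => by rw [svalSq_of_le A hk] at hlt; linarith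
  have hpos := (svalSq_antitone_s8 A).lt_card_fin_lt_apply hk hlt
  rw [← card_eigenvalues_gt_eq_card_svalSq_gt] at hpos
  obtain ⟨⟨i, hi⟩⟩ := Fintype.card_pos_iff.mp (k.zero_le.trans_lt hpos)
  exact hi.not_ge ((hermAAT A).eigenvalues_le_of_forall_dotProduct_mulVec_le h i)

/-- Weyl's inequality. -/
theorem svalSq_le_svalSq_add {A : Matrix (Fin m) (Fin n) ℝ} {C : Matrix (Fin m) (Fin c) ℝ}
    {δ : ℝ} (hδ : 0 ≤ δ)
    (h : ∀ x, x ⬝ᵥ ((C * Cᵀ) *ᵥ x) ≤ x ⬝ᵥ ((A * Aᵀ) *ᵥ x) + δ * (x ⬝ᵥ x)) (k : ℕ) :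
    svalSq C k ≤ svalSq A k + δ := by
  by_contra! hlt
  have hk : k < m := lt_of_not_ge fun hk => by
    rw [svalSq_of_le C hk] at hlt; linarith [svalSq_nonneg_s8 A k]
  have hC := (svalSq_antitone_s8 C).lt_card_fin_lt_apply hk hlt
  have hA := (svalSq_antitone_s8 A).card_fin_lt_apply_le m k
  rw [← card_eigenvalues_gt_eq_card_svalSq_gt] at hC hA
  obtain ⟨V, hV⟩ := (hermAAT C).exists_mul_dotProduct_lt_of_eigenvalues_gt (svalSq A k + δ)
  have hCA := (hermAAT A).card_le_card_eigenvalues_gt (c := svalSq A k) V fun a ha => by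
    linarith [hV a ha, h (V *ᵥ a)]
  have hk' := Fintype.card_subtype_le fun j : Fin k => svalSq A k < svalSq A j
  rw [Fintype.card_fin] at hk'
  omega

theorem dotProduct_mulVec_le_svalSq_mul_of_orthogonal {C : Matrix (Fin m) (Fin c) ℝ} {k : ℕ}
    {H : Matrix (Fin m) (Fin k) ℝ} (hH : Hᵀ * H = 1)
    (hCH : C * Cᵀ * H = H * diagonal fun i : Fin k => svalSq C i) {z : Fin m → ℝ}
    (hz : Hᵀ *ᵥ z = 0) :
    z ⬝ᵥ ((C * Cᵀ) *ᵥ z) ≤ svalSq C k * (z ⬝ᵥ z) := by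
  by_contra! hlt
  -- Otherwise `z` and the columns of `H` with eigenvalue above `svalSq C k` span a subspace on
  -- which the Rayleigh quotient of `C Cᵀ` exceeds `svalSq C k`; its dimension is larger than the
  -- number of eigenvalues above `svalSq C k`, since these all occur among the first `k`.
  let H' := H.submatrix id (Subtype.val : {j : Fin k // svalSq C k < svalSq C j} → Fin k)
  have hH' : H'ᵀ * H' = 1 := by
    rw [transpose_submatrix, ← submatrix_mul _ _ _ id _ Function.bijective_id, hH,
      submatrix_one _ Subtype.val_injective]
  have hH'z : H'ᵀ *ᵥ z = 0 := funext fun j => congrFun hz j.1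
  have hCH' : C * Cᵀ * H' =
      H' * diagonal fun j : {j : Fin k // svalSq C k < svalSq C j} => svalSq C j := by
    ext r j
    have := congrFun (congrFun hCH r) j.1
    rw [mul_diagonal] at this ⊢
    exact this
  have hV := transpose_mul_mul_fromCols_replicateCol_eq_diagonal transpose_one hH' (d := 1)
    (by simp) hH'z
  have hCV := transpose_mul_mul_fromCols_replicateCol_eq_diagonal
    (by rw [transpose_mul, transpose_transpose]) hH' hCH' hH'z
  rw [Matrix.mul_one, one_mulVec] at hV
  have hcard := (hermAAT C).card_le_card_eigenvalues_gt _ fun a ha =>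
    mul_dotProduct_lt_of_transpose_mul_eq_diagonal hV hCV
      (fun | .inl j => by simpa using j.2 | .inr _ => hlt) ha
  have hC := (svalSq_antitone_s8 C).card_fin_lt_apply_le m k
  rw [card_eigenvalues_gt_eq_card_svalSq_gt, Fintype.card_sum, Fintype.card_unit] at hcard
  omega

end SingularValues

theorem stmt8_general {m n c k : ℕ} (A : Matrix (Fin m) (Fin n) ℝ) (C : Matrix (Fin m) (Fin c) ℝ)
    (ε : ℝ) (hε0 : 0 < ε)
    (hRQ : ∀ x : Fin m → ℝ, x ⬝ᵥ x = 1 →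
      |x ⬝ᵥ ((A * Aᵀ) *ᵥ x) - x ⬝ᵥ ((C * Cᵀ) *ᵥ x)| ≤ 3 * ε * frobSq A)
    (H : Matrix (Fin m) (Fin k) ℝ) (hH : Hᵀ * H = 1)
    (hsing : ∀ i : Fin k,
      (C * Cᵀ) *ᵥ (fun x => H x i) = svalSq C (i : ℕ) • (fun x => H x i)) :
    svalSq (A - H * Hᵀ * A) 0 ≤ svalSq A k + 6 * ε * frobSq A := by
  have hεF : 0 ≤ ε * frobSq A :=
    mul_nonneg hε0.le (Finset.sum_nonneg fun _ _ => Finset.sum_nonneg fun _ _ => sq_nonneg _)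
  have hAC (x : Fin m → ℝ) :
      |x ⬝ᵥ ((A * Aᵀ) *ᵥ x) - x ⬝ᵥ ((C * Cᵀ) *ᵥ x)| ≤ 3 * ε * frobSq A * (x ⬝ᵥ x) := by
    simpa only [sub_mulVec, dotProduct_sub] using
      abs_dotProduct_mulVec_le_mul_dotProduct_self (N := A * Aᵀ - C * Cᵀ)
        (fun y hy => by simpa only [sub_mulVec, dotProduct_sub] using hRQ y hy) x
  have hweyl : svalSq C k ≤ svalSq A k + 3 * ε * frobSq A :=
    svalSq_le_svalSq_add (by linarith) (fun x => by linarith [(abs_le.mp (hAC x)).1]) k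
  have hCH : C * Cᵀ * H = H * diagonal fun i : Fin k => svalSq C i := by
    ext r i
    rw [mul_diagonal]
    simpa [mulVec, dotProduct, mul_apply, mul_comm] using congrFun (hsing i) r
  refine svalSq_le_of_forall_dotProduct_mulVec_le _ (by linarith [svalSq_nonneg_s8 A k])
    (fun x => ?_) 0
  set z := x - (H * Hᵀ) *ᵥ x
  have hz : Hᵀ *ᵥ z = 0 := transpose_mulVec_sub_mul_transpose_mulVec H x hH
  have hzz : 0 ≤ z ⬝ᵥ z := by simpa using dotProduct_star_self_nonneg z
  rw [dotProduct_sub_mul_transpose_mul_mulVec]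
  calc z ⬝ᵥ ((A * Aᵀ) *ᵥ z) ≤ z ⬝ᵥ ((C * Cᵀ) *ᵥ z) + 3 * ε * frobSq A * (z ⬝ᵥ z) := by
        linarith [(abs_le.mp (hAC z)).2]
    _ ≤ (svalSq C k + 3 * ε * frobSq A) * (z ⬝ᵥ z) := by
        linarith [dotProduct_mulVec_le_svalSq_mul_of_orthogonal hH hCH hz]
    _ ≤ (svalSq A k + 6 * ε * frobSq A) * (x ⬝ᵥ x) :=
        mul_le_mul (by linarith) (dotProduct_self_sub_mul_transpose_mulVec_le H x hH) hzz
          (by linarith [svalSq_nonneg_s8 A k])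

theorem stmt8 {m n c k : ℕ} (A : Matrix (Fin m) (Fin n) ℝ) (C : Matrix (Fin m) (Fin c) ℝ)
    (ε : ℝ) (hε0 : 0 < ε) (hε1 : ε < 1)
    (hRQ : ∀ x : Fin m → ℝ, x ⬝ᵥ x = 1 →
      |x ⬝ᵥ ((A * Aᵀ) *ᵥ x) - x ⬝ᵥ ((C * Cᵀ) *ᵥ x)| ≤ 3 * ε * frobSq A)
    (hk : k ≤ c)
    (H : Matrix (Fin m) (Fin k) ℝ) (hH : Hᵀ * H = 1)
    (hsing : ∀ i : Fin k,
      (C * Cᵀ) *ᵥ (fun x => H x i) = svalSq C (i : ℕ) • (fun x => H x i)) :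
    svalSq (A - H * Hᵀ * A) 0 ≤ svalSq A k + 6 * ε * frobSq A :=
  stmt8_general A C ε hε0 hRQ H hH hsing
end
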